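/- arXiv:2203.01896 — 2 statements merged into one kernel-verified Lean document; each statement's English description precedes it below -/
import Mathlib

section
/- Let G be a full DAG and let X be a set of routes in G. There exists an ample framing F of G whose set of exceptional routes equals X if and only if every edge of G is contained in exactly one route of X and the adjacency graph Adj(G,X) is bipartite. -/
/-- A finite directed acyclic multigraph. -/
structure DAG where
  V : Type
  E : Type
  [fintypeV : Fintype V]
  [fintypeE : Fintype E]
  [decEqV : DecidableEq V]
  [decEqE : DecidableEq E]
  src : E → V
  tgt : E → V
  acyclic : ∀ v : V,
    ¬ Relation.TransGen (fun a b : V => ∃ e : E, src e = a ∧ tgt e = b) v v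

attribute [instance] DAG.fintypeV DAG.fintypeE DAG.decEqV DAG.decEqE

namespace DAG

variable (G : DAG)

/-- A vertex with no incoming edges. -/
def IsSource (v : G.V) : Prop := ∀ e : G.E, G.tgt e ≠ v

/-- A vertex with no outgoing edges. -/
def IsSink (v : G.V) : Prop := ∀ e : G.E, G.src e ≠ v

/-- An inner vertex is neither a source nor a sink. -/
def IsInner (v : G.V) : Prop := ¬ G.IsSource v ∧ ¬ G.IsSink v

instance : DecidablePred G.IsSource := fun v =>
  decidable_of_iff (∀ e : G.E, G.tgt e ≠ v) Iff.rfl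

instance : DecidablePred G.IsSink := fun v =>
  decidable_of_iff (∀ e : G.E, G.src e ≠ v) Iff.rfl

instance : DecidablePred G.IsInner := fun v =>
  decidable_of_iff (¬ G.IsSource v ∧ ¬ G.IsSink v) Iff.rfl

/-- In-degree: the number of edges with target `v`. -/
def indeg (v : G.V) : ℕ := Fintype.card {e : G.E // G.tgt e = v}

/-- Out-degree: the number of edges with source `v`. -/
def outdeg (v : G.V) : ℕ := Fintype.card {e : G.E // G.src e = v}

/-- A DAG is full if every inner vertex has in-degree 2 and out-degree 2. -/
def Full : Prop := ∀ v : G.V, G.IsInner v → G.indeg v = 2 ∧ G.outdeg v = 2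

/-- A route: a maximal directed path, i.e. a nonempty list of consecutive edges
starting at a source and ending at a sink. -/
structure Route where
  edges : List G.E
  ne : edges ≠ []
  chain : edges.Chain' (fun e f => G.tgt e = G.src f)
  source_start : G.IsSource (G.src (edges.head ne))
  sink_end : G.IsSink (G.tgt (edges.getLast ne))

/-- A route visits a vertex if the vertex is an endpoint of one of its edges. -/
def Route.visits (R : G.Route) (v : G.V) : Prop :=
  ∃ e ∈ R.edges, G.src e = v ∨ G.tgt e = v

/-- A framing: a linear order on the incoming edges and a linear order on the
outgoing edges of every inner vertex. -/
structure Framing where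
  inlt : G.E → G.E → Prop
  outlt : G.E → G.E → Prop
  inlt_tgt : ∀ {e f}, inlt e f → G.tgt e = G.tgt f
  inlt_inner : ∀ {e f}, inlt e f → G.IsInner (G.tgt e)
  inlt_irrefl : ∀ e, ¬ inlt e e
  inlt_trans : ∀ {e f g}, inlt e f → inlt f g → inlt e g
  inlt_total : ∀ e f, G.tgt e = G.tgt f → G.IsInner (G.tgt e) → e ≠ f →
    inlt e f ∨ inlt f e
  outlt_src : ∀ {e f}, outlt e f → G.src e = G.src f
  outlt_inner : ∀ {e f}, outlt e f → G.IsInner (G.src e)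
  outlt_irrefl : ∀ e, ¬ outlt e e
  outlt_trans : ∀ {e f g}, outlt e f → outlt f g → outlt e g
  outlt_total : ∀ e f, G.src e = G.src f → G.IsInner (G.src e) → e ≠ f →
    outlt e f ∨ outlt f e

/-- The induced order on paths ending at a common vertex: compare the two edges
just before the longest common suffix. -/
def inPathLt (F : G.Framing) (P Q : List G.E) : Prop :=
  ∃ (p q s : List G.E) (e f : G.E), e ≠ f ∧
    P = p ++ e :: s ∧ Q = q ++ f :: s ∧ F.inlt e f

/-- The induced order on paths starting at a common vertex: compare the two edges
just after the longest common prefix. -/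
def outPathLt (F : G.Framing) (P Q : List G.E) : Prop :=
  ∃ (s p q : List G.E) (e f : G.E), e ≠ f ∧
    P = s ++ e :: p ∧ Q = s ++ f :: q ∧ F.outlt e f

/-- Routes `P` and `Q` are in conflict (with `P` playing the first role) if they
pass through a common inner vertex `v` with `Pv ≺ Qv` in the in-order and
`vQ ≺ vP` in the out-order. -/
def Conflict (F : G.Framing) (P Q : G.Route) : Prop :=
  ∃ (v : G.V) (a b c d : List G.E) (ea ec : G.E),
    P.edges = a ++ [ea] ++ b ∧ Q.edges = c ++ [ec] ++ d ∧
    G.tgt ea = v ∧ G.tgt ec = v ∧ b ≠ [] ∧ d ≠ [] ∧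
    G.inPathLt F (a ++ [ea]) (c ++ [ec]) ∧ G.outPathLt F d b

/-- Two routes are coherent if they are not in conflict at any common inner
vertex (in either order). -/
def CoherentPair (F : G.Framing) (P Q : G.Route) : Prop :=
  ¬ G.Conflict F P Q ∧ ¬ G.Conflict F Q P

/-- A route is exceptional if it is coherent with every route. -/
def Exceptional (F : G.Framing) (R : G.Route) : Prop :=
  ∀ S : G.Route, G.CoherentPair F R S

/-- An edge is idle if it is the unique incoming or the unique outgoing edge of
an inner vertex. -/
def Idle (e : G.E) : Prop :=
  (G.IsInner (G.tgt e) ∧ ∀ f : G.E, G.tgt f = G.tgt e → f = e) ∨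
  (G.IsInner (G.src e) ∧ ∀ f : G.E, G.src f = G.src e → f = e)

/-- A framing is ample if every non-idle edge lies on an exceptional route. -/
def Ample (F : G.Framing) : Prop :=
  ∀ e : G.E, ¬ G.Idle e → ∃ R : G.Route, G.Exceptional F R ∧ e ∈ R.edges

/-- `e` is smallest among the edges entering its target. -/
def MinIn (F : G.Framing) (e : G.E) : Prop :=
  ∀ f : G.E, G.tgt f = G.tgt e → f ≠ e → F.inlt e f

/-- `e` is largest among the edges entering its target. -/
def MaxIn (F : G.Framing) (e : G.E) : Prop :=
  ∀ f : G.E, G.tgt f = G.tgt e → f ≠ e → F.inlt f e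

/-- `e` is smallest among the edges leaving its source. -/
def MinOut (F : G.Framing) (e : G.E) : Prop :=
  ∀ f : G.E, G.src f = G.src e → f ≠ e → F.outlt e f

/-- `e` is largest among the edges leaving its source. -/
def MaxOut (F : G.Framing) (e : G.E) : Prop :=
  ∀ f : G.E, G.src f = G.src e → f ≠ e → F.outlt f e

/-- The characteristic vector of a route. -/
noncomputable def charVec (R : G.Route) : G.E → ℝ :=
  fun e => if e ∈ R.edges then 1 else 0

end DAG

namespace DAG

variable (G : DAG)

/-- Two routes are adjacent (in the adjacency graph of a set of routes) when
they share a common inner vertex. -/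
def RoutesAdjacent (R S : G.Route) : Prop :=
  ∃ v : G.V, G.IsInner v ∧ DAG.Route.visits G R v ∧ DAG.Route.visits G S v

/-- The adjacency graph of a set `X` of routes is bipartite: the routes of `X`
can be 2-colored so that routes sharing a common inner vertex get distinct
colors. -/
def AdjBipartite (X : Set G.Route) : Prop :=
  ∃ c : G.Route → Bool, ∀ R ∈ X, ∀ S ∈ X, R ≠ S →
    G.RoutesAdjacent R S → c R ≠ c S

end DAG


namespace DAG
variable {G : DAG}

/-- The one-step reachability relation on vertices. -/
def Step (G : DAG) (a b : G.V) : Prop := ∃ e : G.E, G.src e = a ∧ G.tgt e = b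

lemma wf_fwd : WellFounded (fun a b : G.V => Relation.TransGen G.Step b a) := by
  have h1 : IsTrans G.V (fun a b : G.V => Relation.TransGen G.Step b a) :=
    ⟨fun a b c hab hbc => Relation.TransGen.trans hbc hab⟩
  have h2 : IsIrrefl G.V (fun a b : G.V => Relation.TransGen G.Step b a) :=
    ⟨fun a => G.acyclic a⟩
  exact Finite.wellFounded_of_trans_of_irrefl _

lemma wf_bwd : WellFounded (fun a b : G.V => Relation.TransGen G.Step a b) := by
  have h1 : IsTrans G.V (fun a b : G.V => Relation.TransGen G.Step a b) :=
    ⟨fun a b c hab hbc => Relation.TransGen.trans hab hbc⟩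
  have h2 : IsIrrefl G.V (fun a b : G.V => Relation.TransGen G.Step a b) :=
    ⟨fun a => G.acyclic a⟩
  exact Finite.wellFounded_of_trans_of_irrefl _

lemma exists_tail : ∀ (v : G.V) (e : G.E), G.tgt e = v → ∃ l : List G.E,
    List.Chain' (fun a b => G.tgt a = G.src b) (e :: l) ∧
    ∀ x, (e :: l).getLast? = some x → G.IsSink (G.tgt x) := by
  intro v
  induction v using wf_fwd.induction with
  | _ v ih =>
    intro e he
    by_cases hs : G.IsSink v
    · refine ⟨[], List.isChain_singleton e, ?_⟩
      intro x hx
      simp only [List.getLast?_singleton, Option.some.injEq] at hx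
      subst hx; rwa [he]
    · simp only [IsSink, not_forall, not_not] at hs
      obtain ⟨f, hf⟩ := hs
      obtain ⟨l, hl, hsink⟩ := ih (G.tgt f) (Relation.TransGen.single ⟨f, hf, rfl⟩) f rfl
      refine ⟨f :: l, List.isChain_cons_cons.mpr ⟨by rw [he, hf], hl⟩, ?_⟩
      intro x hx
      exact hsink x (by simpa using hx)

lemma exists_head : ∀ (v : G.V) (e : G.E), G.src e = v → ∃ l : List G.E,
    List.Chain' (fun a b => G.tgt a = G.src b) (l ++ [e]) ∧
    ∀ x, (l ++ [e]).head? = some x → G.IsSource (G.src x) := by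
  intro v
  induction v using wf_bwd.induction with
  | _ v ih =>
    intro e he
    by_cases hs : G.IsSource v
    · refine ⟨[], List.isChain_singleton e, ?_⟩
      intro x hx
      simp only [List.nil_append, List.head?_cons, Option.some.injEq] at hx
      subst hx; rwa [he]
    · simp only [IsSource, not_forall, not_not] at hs
      obtain ⟨f, hf⟩ := hs
      obtain ⟨l, hl, hsrc⟩ := ih (G.src f) (Relation.TransGen.single ⟨f, rfl, hf⟩) f rfl
      refine ⟨l ++ [f], ?_, ?_⟩
      · refine List.isChain_append.mpr ⟨hl, List.isChain_singleton e, ?_⟩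
        intro x hx y hy
        rw [List.head?_cons, Option.mem_def, Option.some.injEq] at hy
        rw [List.getLast?_concat, Option.mem_def, Option.some.injEq] at hx
        subst hy; subst hx
        rw [hf, he]
      · intro x hx
        refine hsrc x ?_
        rcases l with - | ⟨a, l'⟩
        · simpa using hx
        · simpa using hx

/-- Any pair of consecutive edges extends to a route. -/
lemma exists_route_pair (e f : G.E) (h : G.tgt e = G.src f) :
    ∃ (U : G.Route) (c d : List G.E), U.edges = c ++ e :: f :: d := by
  obtain ⟨l1, hc1, hsrc⟩ := exists_head (G.src e) e rfl
  obtain ⟨l2, hc2, hsink⟩ := exists_tail (G.tgt f) f rfl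
  have hsplit : l1 ++ e :: f :: l2 = (l1 ++ [e]) ++ (f :: l2) := by simp
  have hne : l1 ++ e :: f :: l2 ≠ [] := by simp
  have hchain : List.Chain' (fun a b => G.tgt a = G.src b) (l1 ++ e :: f :: l2) := by
    rw [hsplit]
    refine List.isChain_append.mpr ⟨hc1, hc2, ?_⟩
    intro x hx y hy
    rw [List.getLast?_concat, Option.mem_def, Option.some.injEq] at hx
    rw [List.head?_cons, Option.mem_def, Option.some.injEq] at hy
    subst hx; subst hy; exact h
  refine ⟨⟨l1 ++ e :: f :: l2, hne, hchain, ?_, ?_⟩, l1, l2, rfl⟩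
  · refine hsrc _ ?_
    rw [← List.head?_eq_head]
    rcases l1 with - | ⟨a, l'⟩ <;> simp
  · refine hsink _ ?_
    rw [← List.getLast?_eq_getLast]
    rw [hsplit, List.getLast?_append,
      List.getLast?_eq_getLast (l := f :: l2) (by simp)]
    rfl

/-- Routes are determined by their edge lists. -/
lemma Route.ext {R S : G.Route} (h : R.edges = S.edges) : R = S := by
  cases R; cases S; simp_all

lemma chain_transGen_tgt {x : G.E} {l : List G.E}
    (hc : List.Chain' (fun a b => G.tgt a = G.src b) (x :: l)) {y : G.E} (hy : y ∈ l) :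
    Relation.TransGen G.Step (G.tgt x) (G.tgt y) := by
  induction l generalizing x with
  | nil => simp at hy
  | cons z l ih =>
    rw [List.Chain', List.isChain_cons_cons] at hc
    have hxz : Relation.TransGen G.Step (G.tgt x) (G.tgt z) :=
      Relation.TransGen.single ⟨z, hc.1.symm, rfl⟩
    rcases List.mem_cons.mp hy with rfl | hy'
    · exact hxz
    · exact hxz.trans (ih hc.2 hy')

lemma chain_transGen_src {x : G.E} {l : List G.E}
    (hc : List.Chain' (fun a b => G.tgt a = G.src b) (x :: l)) {y : G.E} (hy : y ∈ l) :
    Relation.TransGen G.Step (G.src x) (G.src y) := by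
  induction l generalizing x with
  | nil => simp at hy
  | cons z l ih =>
    rw [List.Chain', List.isChain_cons_cons] at hc
    have hxz : Relation.TransGen G.Step (G.src x) (G.src z) :=
      Relation.TransGen.single ⟨x, rfl, hc.1 ▸ rfl⟩
    rcases List.mem_cons.mp hy with rfl | hy'
    · exact hxz
    · exact hxz.trans (ih hc.2 hy')

lemma list_mid_lt {α : Type*} : ∀ (A A' : List α) {B B' : List α} {x y : α},
    A ++ x :: B = A' ++ y :: B' → A.length < A'.length → y ∈ B
  | [], [], _, _, _, _, _, hlen => absurd hlen (by simp)
  | [], (a' :: A'), B, B', x, y, h, _ => by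
      simp only [List.nil_append, List.cons_append, List.cons.injEq] at h
      rw [h.2]; simp
  | (a :: A), [], _, _, _, _, _, hlen => absurd hlen (by simp)
  | (a :: A), (a' :: A'), B, B', x, y, h, hlen => by
      simp only [List.cons_append, List.cons.injEq] at h
      exact list_mid_lt A A' h.2 (by simpa using hlen)

lemma list_mid_cases {α : Type*} (A A' B B' : List α) (x y : α)
    (h : A ++ x :: B = A' ++ y :: B') :
    (x = y ∧ A = A' ∧ B = B') ∨ y ∈ B ∨ x ∈ B' := by
  rcases lt_trichotomy A.length A'.length with hlt | heq | hgt
  · exact Or.inr (Or.inl (list_mid_lt A A' h hlt))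
  · obtain ⟨hA, hrest⟩ := List.append_inj h heq
    simp only [List.cons.injEq] at hrest
    exact Or.inl ⟨hrest.1, hA, hrest.2⟩
  · exact Or.inr (Or.inr (list_mid_lt A' A h.symm hgt))

lemma route_tgt_inj {R : G.Route} {A B A' B' : List G.E} {x y : G.E}
    (h1 : R.edges = A ++ x :: B) (h2 : R.edges = A' ++ y :: B')
    (ht : G.tgt x = G.tgt y) : x = y := by
  rcases list_mid_cases A A' B B' x y (h1.symm.trans h2) with h | hy | hx
  · exact h.1
  · exfalso
    have hc : List.Chain' (fun a b => G.tgt a = G.src b) (x :: B) :=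
      R.chain.infix ⟨A, [], by simp [h1]⟩
    exact G.acyclic _ (ht ▸ chain_transGen_tgt hc hy)
  · exfalso
    have hc : List.Chain' (fun a b => G.tgt a = G.src b) (y :: B') :=
      R.chain.infix ⟨A', [], by simp [h2]⟩
    exact G.acyclic _ (ht ▸ chain_transGen_tgt hc hx)

lemma route_src_inj {R : G.Route} {A B A' B' : List G.E} {x y : G.E}
    (h1 : R.edges = A ++ x :: B) (h2 : R.edges = A' ++ y :: B')
    (ht : G.src x = G.src y) : x = y := by
  rcases list_mid_cases A A' B B' x y (h1.symm.trans h2) with h | hy | hx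
  · exact h.1
  · exfalso
    have hc : List.Chain' (fun a b => G.tgt a = G.src b) (x :: B) :=
      R.chain.infix ⟨A, [], by simp [h1]⟩
    exact G.acyclic _ (ht ▸ chain_transGen_src hc hy)
  · exfalso
    have hc : List.Chain' (fun a b => G.tgt a = G.src b) (y :: B') :=
      R.chain.infix ⟨A', [], by simp [h2]⟩
    exact G.acyclic _ (ht ▸ chain_transGen_src hc hx)

lemma exists_route_thru (L : List G.E) (h0 : L ≠ [])
    (hc : List.Chain' (fun a b => G.tgt a = G.src b) L) :
    ∃ (U : G.Route) (c d : List G.E), U.edges = c ++ L ++ d := by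
  obtain ⟨l1, hc1, hsrc⟩ := exists_head (G.src (L.head h0)) (L.head h0) rfl
  obtain ⟨l2, hc2, hsink⟩ := exists_tail (G.tgt (L.getLast h0)) (L.getLast h0) rfl
  have hne : l1 ++ L ++ l2 ≠ [] := by simp [h0]
  have hchain : List.Chain' (fun a b => G.tgt a = G.src b) (l1 ++ L ++ l2) := by
    rw [List.append_assoc]
    have hc1' := List.isChain_append.mp hc1
    refine List.isChain_append.mpr ⟨hc1'.1, ?_, ?_⟩
    · refine List.isChain_append.mpr ⟨hc, hc2.tail, ?_⟩
      intro x hx y hy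
      rw [List.getLast?_eq_getLast (l := L) h0, Option.mem_def, Option.some.injEq] at hx
      subst hx
      exact (List.isChain_cons.mp hc2).1 y hy
    · intro x hx y hy
      rw [List.head?_append, List.head?_eq_head h0] at hy
      have hy' : y = L.head h0 := by simpa using hy.symm
      subst hy'
      exact hc1'.2.2 x hx (L.head h0) (by simp)
  refine ⟨⟨l1 ++ L ++ l2, hne, hchain, ?_, ?_⟩, l1, l2, rfl⟩
  · refine hsrc _ ?_
    rw [← List.head?_eq_head]
    rw [List.append_assoc, List.head?_append, List.head?_append]
    congr 1
    rw [List.head?_append, List.head?_eq_head h0]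
    rfl
  · refine hsink _ ?_
    rw [← List.getLast?_eq_getLast]
    rw [List.getLast?_append]
    rcases l2 with - | ⟨a, l'⟩
    · rw [List.getLast?_append, List.getLast?_eq_getLast (l := L) h0]
      rfl
    · rw [List.getLast?_eq_getLast (l := a :: l') (by simp)]
      rfl

/-- Constructing a conflict from local data. -/
lemma mkConflict (F : G.Framing) {P Q : G.Route} {a b c d s : List G.E} {e e' f f' : G.E}
    (hP : P.edges = a ++ e :: (s ++ f :: b)) (hQ : Q.edges = c ++ e' :: (s ++ f' :: d))
    (ht : G.tgt e' = G.tgt e) (hin : F.inlt e e') (hout : F.outlt f' f) :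
    G.Conflict F P Q := by
  refine ⟨G.tgt e, a, s ++ f :: b, c, s ++ f' :: d, e, e', by simpa using hP,
    by simpa using hQ, rfl, ht, by simp, by simp, ?_, ?_⟩
  · exact ⟨a, c, [], e, e', fun h => absurd (h ▸ hin) (F.inlt_irrefl e'),
      by simp, by simp, hin⟩
  · exact ⟨s, d, b, f', f, fun h => absurd (h ▸ hout) (F.outlt_irrefl f), rfl, rfl, hout⟩


lemma isInner_of {v : G.V} {e f : G.E} (he : G.tgt e = v) (hf : G.src f = v) : G.IsInner v :=
  ⟨fun hs => hs e he, fun hs => hs f hf⟩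

lemma exists_other_in (hfull : G.Full) {v : G.V} (hv : G.IsInner v) {e : G.E}
    (he : G.tgt e = v) : ∃ g, G.tgt g = v ∧ g ≠ e := by
  have h2 : Fintype.card {f : G.E // G.tgt f = v} = 2 := (hfull v hv).1
  have h1 : 1 < Fintype.card {f : G.E // G.tgt f = v} := by omega
  obtain ⟨⟨g, hg⟩, hne⟩ := Fintype.exists_ne_of_one_lt_card h1 ⟨e, he⟩
  exact ⟨g, hg, fun h => hne (Subtype.ext h)⟩

lemma exists_other_out (hfull : G.Full) {v : G.V} (hv : G.IsInner v) {e : G.E}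
    (he : G.src e = v) : ∃ g, G.src g = v ∧ g ≠ e := by
  have h2 : Fintype.card {f : G.E // G.src f = v} = 2 := (hfull v hv).2
  have h1 : 1 < Fintype.card {f : G.E // G.src f = v} := by omega
  obtain ⟨⟨g, hg⟩, hne⟩ := Fintype.exists_ne_of_one_lt_card h1 ⟨e, he⟩
  exact ⟨g, hg, fun h => hne (Subtype.ext h)⟩

lemma card_two_cases {α : Type*} [Fintype α] [DecidableEq α] (h : Fintype.card α = 2)
    (a b c : α) (hab : a ≠ b) : c = a ∨ c = b := by
  rw [← Finset.card_univ, Finset.card_eq_two] at h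
  obtain ⟨x, y, hxy, huniv⟩ := h
  have hmem : ∀ z : α, z = x ∨ z = y := by
    intro z
    have := Finset.mem_univ z
    rw [huniv] at this
    simpa using this
  rcases hmem a with h1|h1 <;> rcases hmem b with h2|h2 <;> rcases hmem c with h3|h3 <;>
    first
      | (exact absurd (h1.trans h2.symm) hab)
      | (exact Or.inl (h3.trans h1.symm))
      | (exact Or.inr (h3.trans h2.symm))

lemma in_two (hfull : G.Full) {v : G.V} (hv : G.IsInner v) {x y z : G.E}
    (hx : G.tgt x = v) (hy : G.tgt y = v) (hz : G.tgt z = v) (hxy : x ≠ y) :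
    z = x ∨ z = y := by
  have h2 : Fintype.card {f : G.E // G.tgt f = v} = 2 := (hfull v hv).1
  have := card_two_cases h2 ⟨x, hx⟩ ⟨y, hy⟩ ⟨z, hz⟩ (fun h => hxy (congrArg Subtype.val h))
  rcases this with h|h
  · exact Or.inl (congrArg Subtype.val h)
  · exact Or.inr (congrArg Subtype.val h)

lemma out_two (hfull : G.Full) {v : G.V} (hv : G.IsInner v) {x y z : G.E}
    (hx : G.src x = v) (hy : G.src y = v) (hz : G.src z = v) (hxy : x ≠ y) :
    z = x ∨ z = y := by
  have h2 : Fintype.card {f : G.E // G.src f = v} = 2 := (hfull v hv).2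
  have := card_two_cases h2 ⟨x, hx⟩ ⟨y, hy⟩ ⟨z, hz⟩ (fun h => hxy (congrArg Subtype.val h))
  rcases this with h|h
  · exact Or.inl (congrArg Subtype.val h)
  · exact Or.inr (congrArg Subtype.val h)

lemma inlt_asymm (F : G.Framing) {e f : G.E} (h : F.inlt e f) : ¬ F.inlt f e :=
  fun h2 => F.inlt_irrefl e (F.inlt_trans h h2)

lemma outlt_asymm (F : G.Framing) {e f : G.E} (h : F.outlt e f) : ¬ F.outlt f e :=
  fun h2 => F.outlt_irrefl e (F.outlt_trans h h2)

/-- The key consequence of exceptionality: at any place along an exceptional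
route, the in-order of the incoming edge agrees with the out-order of any later
outgoing edge separated by a common block. -/
lemma exceptional_in_iff_out (hfull : G.Full) {F : G.Framing} {R : G.Route}
    (hR : G.Exceptional F R) {A B s : List G.E} {x z : G.E}
    (hAB : R.edges = A ++ x :: (s ++ z :: B))
    {x' z' : G.E} (hx' : G.tgt x' = G.tgt x) (hxne : x' ≠ x)
    (hz' : G.src z' = G.src z) (hzne : z' ≠ z) :
    (F.inlt x x' ↔ F.outlt z z') := by
  have hc : List.Chain' (fun a b => G.tgt a = G.src b) (x :: (s ++ z :: B)) :=
    R.chain.infix ⟨A, [], by simp [hAB]⟩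
  have hc2 : List.Chain' (fun a b => G.tgt a = G.src b) ((x :: s) ++ [z]) :=
    R.chain.infix ⟨A, B, by simp [hAB]⟩
  have hcc := List.isChain_cons.mp hc
  have hlastrel : G.tgt ((x :: s).getLast (by simp)) = G.src z := by
    refine (List.isChain_append.mp hc2).2.2 _ ?_ z (by simp)
    rw [List.getLast?_eq_getLast (l := x :: s) (by simp)]
    rfl
  have hvinner : G.IsInner (G.tgt x) := by
    refine isInner_of (e := x) rfl (f := (s ++ z :: B).head (by simp)) ?_
    exact (hcc.1 _ (by rw [List.head?_eq_head (by simp)]; rfl)).symm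
  have hzinner : G.IsInner (G.src z) :=
    isInner_of (e := (x :: s).getLast (by simp)) hlastrel (f := z) rfl
  have hchainU : List.Chain' (fun a b => G.tgt a = G.src b) (x' :: (s ++ [z'])) := by
    rcases s with - | ⟨w, s'⟩
    · refine List.isChain_cons_cons.mpr ⟨?_, List.isChain_singleton _⟩
      rw [hx', hz']
      exact hcc.1 z (by simp)
    · refine List.isChain_cons.mpr ⟨?_, ?_⟩
      · intro y hy
        simp only [List.cons_append, List.head?_cons, Option.mem_def, Option.some.injEq] at hy
        subst hy
        rw [hx']
        exact hcc.1 w (by simp)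
      · have : w :: s' ++ [z'] = (w :: s') ++ [z'] := by simp
        rw [this]
        refine List.isChain_append.mpr ⟨?_, List.isChain_singleton _, ?_⟩
        · exact R.chain.infix ⟨A ++ [x], z :: B, by simp [hAB]⟩
        · intro a ha y hy
          simp only [List.head?_cons, Option.mem_def, Option.some.injEq] at hy
          subst hy
          rw [List.getLast?_eq_getLast (l := w :: s') (by simp), Option.mem_def,
            Option.some.injEq] at ha
          subst ha
          rw [hz']
          have := hlastrel
          rwa [List.getLast_cons (by simp)] at this
  obtain ⟨U, c, d, hU⟩ := exists_route_thru (x' :: (s ++ [z'])) (by simp) hchainU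
  have hU' : U.edges = c ++ x' :: (s ++ z' :: d) := by
    rw [hU]; simp
  constructor
  · intro hinlt
    by_contra hno
    have hout : F.outlt z' z := by
      rcases F.outlt_total z z' hz'.symm hzinner (fun h => hzne h.symm) with h | h
      · exact absurd h hno
      · exact h
    exact (hR U).1 (mkConflict F hAB hU' hx' hinlt hout)
  · intro houtlt
    by_contra hno
    have hinlt' : F.inlt x' x := by
      rcases F.inlt_total x x' hx'.symm hvinner (fun h => hxne h.symm) with h | h
      · exact absurd h hno
      · exact h
    exact (hR U).2 (mkConflict F hU' hAB hx'.symm hinlt' houtlt)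


lemma rel_of_infix {R : G.Route} {A B : List G.E} {x y : G.E}
    (h : R.edges = A ++ x :: y :: B) : G.tgt x = G.src y := by
  have hc : List.Chain' (fun a b => G.tgt a = G.src b) [x, y] :=
    R.chain.infix ⟨A, B, by simp [h]⟩
  exact (List.isChain_cons_cons.mp hc).1

lemma not_idle (hfull : G.Full) (e : G.E) : ¬ G.Idle e := by
  rintro (⟨hinner, huniq⟩ | ⟨hinner, huniq⟩)
  · obtain ⟨g, hg, hne⟩ := exists_other_in hfull hinner rfl
    exact hne (huniq g hg)
  · obtain ⟨g, hg, hne⟩ := exists_other_out hfull hinner rfl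
    exact hne (huniq g hg)

lemma exc_tails_eq (hfull : G.Full) {F : G.Framing} {R S : G.Route}
    (hR : G.Exceptional F R) (hS : G.Exceptional F S) :
    ∀ (B B' A A' : List G.E) (x : G.E),
      R.edges = A ++ x :: B → S.edges = A' ++ x :: B' → B = B' := by
  intro B
  induction B with
  | nil =>
    intro B' A A' x h1 h2
    have hsink : G.IsSink (G.tgt x) := by
      have hx : R.edges.getLast R.ne = x := by
        have h3 : R.edges.getLast? = some x := by
          rw [h1]
          exact List.getLast?_concat
        rw [List.getLast?_eq_getLast R.ne, Option.some.injEq] at h3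
        exact h3
      have := R.sink_end
      rwa [hx] at this
    cases B' with
    | nil => rfl
    | cons y B2 =>
      exfalso
      have hrel : G.tgt x = G.src y :=
        rel_of_infix h2
      exact hsink y hrel.symm
  | cons y B2 ih =>
    intro B' A A' x h1 h2
    cases B' with
    | nil =>
      exfalso
      have hsink : G.IsSink (G.tgt x) := by
        have hx : S.edges.getLast S.ne = x := by
          have h3 : S.edges.getLast? = some x := by
            rw [h2]
            exact List.getLast?_concat
          rw [List.getLast?_eq_getLast S.ne, Option.some.injEq] at h3
          exact h3
        have := S.sink_end
        rwa [hx] at this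
      have hrel : G.tgt x = G.src y :=
        rel_of_infix h1
      exact hsink y hrel.symm
    | cons y' B2' =>
      have hrelR : G.tgt x = G.src y :=
        rel_of_infix h1
      have hrelS : G.tgt x = G.src y' :=
        rel_of_infix h2
      by_cases hyy : y = y'
      · subst hyy
        have := ih B2' (A ++ [x]) (A' ++ [x]) y (by simp [h1]) (by simp [h2])
        rw [this]
      · exfalso
        have hv : G.IsInner (G.tgt x) := isInner_of rfl hrelR.symm
        obtain ⟨g, hg, hgne⟩ := exists_other_in hfull hv rfl
        have hiffR : F.inlt x g ↔ F.outlt y y' :=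
          exceptional_in_iff_out hfull hR (s := []) (by simpa using h1) hg hgne
            (hrelS.symm.trans hrelR) (Ne.symm hyy)
        have hiffS : F.inlt x g ↔ F.outlt y' y :=
          exceptional_in_iff_out hfull hS (s := []) (by simpa using h2) hg hgne
            (hrelR.symm.trans hrelS) hyy
        have hinner_src : G.IsInner (G.src y) := isInner_of (e := x) hrelR rfl
        rcases F.outlt_total y y' (hrelR.symm.trans hrelS) hinner_src hyy with h | h
        · exact outlt_asymm F h (hiffS.mp (hiffR.mpr h))
        · exact outlt_asymm F h (hiffR.mp (hiffS.mpr h))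

lemma exc_heads_eq (hfull : G.Full) {F : G.Framing} {R S : G.Route}
    (hR : G.Exceptional F R) (hS : G.Exceptional F S) :
    ∀ (A A' B : List G.E) (x : G.E),
      R.edges = A ++ x :: B → S.edges = A' ++ x :: B → A = A' := by
  intro A
  induction A using List.reverseRecOn with
  | nil =>
    intro A' B x h1 h2
    have hsrc : G.IsSource (G.src x) := by
      have hx : R.edges.head R.ne = x := by
        have h3 : R.edges.head? = some x := by rw [h1]; rfl
        rw [List.head?_eq_head R.ne, Option.some.injEq] at h3
        exact h3
      have := R.source_start
      rwa [hx] at this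
    rcases A'.eq_nil_or_concat with rfl | ⟨A2, z, rfl⟩
    · rfl
    · exfalso
      have hrel : G.tgt z = G.src x :=
        rel_of_infix (show S.edges = A2 ++ z :: x :: B by simpa using h2)
      exact hsrc z hrel
  | append_singleton A z ih =>
    intro A' B x h1 h2
    have hrelR : G.tgt z = G.src x :=
      rel_of_infix (show R.edges = A ++ z :: x :: B by simpa using h1)
    rcases A'.eq_nil_or_concat with rfl | ⟨A2, z', rfl⟩
    · exfalso
      have hsrc : G.IsSource (G.src x) := by
        have hx : S.edges.head S.ne = x := by
          have h3 : S.edges.head? = some x := by rw [h2]; rfl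
          rw [List.head?_eq_head S.ne, Option.some.injEq] at h3
          exact h3
        have := S.source_start
        rwa [hx] at this
      exact hsrc z hrelR
    · have hrelS : G.tgt z' = G.src x :=
        rel_of_infix (show S.edges = A2 ++ z' :: x :: B by simpa using h2)
      by_cases hzz : z = z'
      · subst hzz
        have := ih A2 (x :: B) z (by simpa using h1) (by simpa using h2)
        rw [this, List.concat_eq_append]
      · exfalso
        have hu : G.IsInner (G.src x) := isInner_of hrelR rfl
        obtain ⟨hh, hhs, hhne⟩ := exists_other_out hfull hu rfl
        have hiffR : F.inlt z z' ↔ F.outlt x hh :=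
          exceptional_in_iff_out hfull hR (s := []) (by simpa using h1)
            (hrelS.trans hrelR.symm) (Ne.symm hzz) hhs hhne
        have hiffS : F.inlt z' z ↔ F.outlt x hh :=
          exceptional_in_iff_out hfull hS (s := []) (by simpa using h2)
            (hrelR.trans hrelS.symm) hzz hhs hhne
        have hinner_t : G.IsInner (G.tgt z) := by
          rw [hrelR]; exact hu
        rcases F.inlt_total z z' (hrelR.trans hrelS.symm) hinner_t hzz with h | h
        · exact inlt_asymm F h (hiffS.mpr (hiffR.mp h))
        · exact inlt_asymm F h (hiffR.mpr (hiffS.mp h))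

/-- Distinct exceptional routes are edge disjoint. -/
lemma exceptional_unique (hfull : G.Full) {F : G.Framing} {R S : G.Route}
    (hR : G.Exceptional F R) (hS : G.Exceptional F S) {e : G.E}
    (heR : e ∈ R.edges) (heS : e ∈ S.edges) : R = S := by
  obtain ⟨A, B, h1⟩ := List.append_of_mem heR
  obtain ⟨A', B', h2⟩ := List.append_of_mem heS
  have hB : B = B' := exc_tails_eq hfull hR hS B B' A A' e h1 h2
  subst hB
  have hA : A = A' := exc_heads_eq hfull hR hS A A' B e h1 h2
  subst hA
  exact Route.ext (h1.trans h2.symm)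


lemma head_eq_of_decomp {R : G.Route} {x : G.E} {B : List G.E}
    (h : R.edges = x :: B) : R.edges.head R.ne = x := by
  have h3 : R.edges.head? = some x := by rw [h]; rfl
  rw [List.head?_eq_head R.ne, Option.some.injEq] at h3
  exact h3

lemma getLast_eq_of_decomp {R : G.Route} {x : G.E} {A : List G.E}
    (h : R.edges = A ++ [x]) : R.edges.getLast R.ne = x := by
  have h3 : R.edges.getLast? = some x := by rw [h]; exact List.getLast?_concat
  rw [List.getLast?_eq_getLast R.ne, Option.some.injEq] at h3
  exact h3

lemma visits_pair {R : G.Route} {v : G.V} (hv : G.IsInner v)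
    (hvis : DAG.Route.visits G R v) :
    ∃ (A : List G.E) (x y : G.E) (B : List G.E),
      R.edges = A ++ x :: y :: B ∧ G.tgt x = v := by
  obtain ⟨e, he, hcase⟩ := hvis
  obtain ⟨A, B, hAB⟩ := List.append_of_mem he
  rcases hcase with hsrc | htgt
  · rcases A.eq_nil_or_concat with rfl | ⟨A2, x, rfl⟩
    · exfalso
      refine hv.1 ?_
      have hx : R.edges.head R.ne = e := head_eq_of_decomp (by simpa using hAB)
      have := R.source_start
      rw [hx, hsrc] at this
      exact this
    · refine ⟨A2, x, e, B, by simpa using hAB, ?_⟩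
      have := rel_of_infix (show R.edges = A2 ++ x :: e :: B by simpa using hAB)
      rw [this, hsrc]
  · rcases B with - | ⟨y, B2⟩
    · exfalso
      refine hv.2 ?_
      have hx : R.edges.getLast R.ne = e := getLast_eq_of_decomp (by simpa using hAB)
      have := R.sink_end
      rw [hx, htgt] at this
      exact this
    · exact ⟨A, e, y, B2, hAB, htgt⟩

lemma minIn_iff_inlt (hfull : G.Full) {F : G.Framing} {x x2 : G.E}
    (hx2 : G.tgt x2 = G.tgt x) (hne : x2 ≠ x) (hv : G.IsInner (G.tgt x)) :
    G.MinIn F x ↔ F.inlt x x2 := by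
  constructor
  · intro h
    exact h x2 hx2 hne
  · intro h f hf hfne
    rcases in_two hfull hv (x := x) (y := x2) rfl hx2 hf (Ne.symm hne) with h1 | h1
    · exact absurd h1 hfne
    · exact h1 ▸ h

lemma minin_step (hfull : G.Full) {F : G.Framing} {R : G.Route}
    (hR : G.Exceptional F R) {A B : List G.E} {x y z : G.E}
    (h : R.edges = A ++ x :: y :: z :: B) : (G.MinIn F x ↔ G.MinIn F y) := by
  have hrel_xy : G.tgt x = G.src y := rel_of_infix (A := A) (B := z :: B) h
  have hrel_yz : G.tgt y = G.src z :=
    rel_of_infix (show R.edges = (A ++ [x]) ++ y :: z :: B by simpa using h)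
  have hv : G.IsInner (G.tgt x) := isInner_of rfl hrel_xy.symm
  have hw : G.IsInner (G.tgt y) := isInner_of rfl hrel_yz.symm
  obtain ⟨x2, hx2, hx2ne⟩ := exists_other_in hfull hv rfl
  obtain ⟨g, hg, hgne⟩ := exists_other_in hfull hw rfl
  have hw' : G.IsInner (G.src z) := hrel_yz ▸ hw
  obtain ⟨h2, hh2, hh2ne⟩ := exists_other_out hfull hw' rfl
  have i1 : F.inlt x x2 ↔ F.outlt z h2 :=
    exceptional_in_iff_out hfull hR (s := [y]) (by simpa using h) hx2 hx2ne hh2 hh2ne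
  have i2 : F.inlt y g ↔ F.outlt z h2 :=
    exceptional_in_iff_out hfull hR (s := [])
      (show R.edges = (A ++ [x]) ++ y :: ([] ++ z :: B) by simpa using h) hg hgne hh2 hh2ne
  rw [minIn_iff_inlt hfull hx2 hx2ne hv, minIn_iff_inlt hfull hg hgne hw, i1, i2]

lemma minin_const (hfull : G.Full) {F : G.Framing} {R : G.Route}
    (hR : G.Exceptional F R) : ∀ (A : List G.E) (x y : G.E) (B : List G.E),
    R.edges = A ++ x :: y :: B → (G.MinIn F x ↔ G.MinIn F (R.edges.head R.ne)) := by
  intro A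
  induction A using List.reverseRecOn with
  | nil =>
    intro x y B h
    rw [head_eq_of_decomp (by simpa using h)]
  | append_singleton A z ih =>
    intro x y B h
    have hstep := minin_step hfull hR (show R.edges = A ++ z :: x :: y :: B by simpa using h)
    have hthis := ih z x (y :: B) (by simpa using h)
    exact hstep.symm.trans hthis

lemma minin_eq (hfull : G.Full) {F : G.Framing} {R : G.Route}
    (hR : G.Exceptional F R) {A B A' B' : List G.E} {x y x' y' : G.E}
    (h : R.edges = A ++ x :: y :: B) (h' : R.edges = A' ++ x' :: y' :: B') :
    (G.MinIn F x ↔ G.MinIn F x') :=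
  (minin_const hfull hR A x y B h).trans (minin_const hfull hR A' x' y' B' h').symm


lemma chain_extend {R : G.Route} :
    ∀ (B : List G.E) (x : G.E) (A C : List G.E),
    List.Chain' (fun a b => G.tgt a = G.src b) (x :: B) →
    R.edges = A ++ x :: C → (∀ y ∈ B, y ∈ R.edges) →
    (∀ w, (x :: B).getLast? = some w → G.IsSink (G.tgt w)) → C = B := by
  intro B
  induction B with
  | nil =>
    intro x A C _ hAC _ hsink
    have hsx : G.IsSink (G.tgt x) := hsink x rfl
    cases C with
    | nil => rfl
    | cons cc C2 =>
      exfalso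
      exact hsx cc (rel_of_infix hAC).symm
  | cons x2 B2 ih =>
    intro x A C hchain hAC hmem hsink
    have hrel : G.tgt x = G.src x2 := (List.isChain_cons_cons.mp hchain).1
    cases C with
    | nil =>
      exfalso
      have hlast : R.edges.getLast R.ne = x := getLast_eq_of_decomp (by simpa using hAC)
      have := R.sink_end
      rw [hlast] at this
      exact this x2 hrel.symm
    | cons cc C2 =>
      have hx2R : x2 ∈ R.edges := hmem x2 (by simp)
      obtain ⟨P, Q, hPQ⟩ := List.append_of_mem hx2R
      have hrelcc : G.tgt x = G.src cc := rel_of_infix hAC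
      have hx2cc : x2 = cc :=
        route_src_inj hPQ (show R.edges = (A ++ [x]) ++ cc :: C2 by simpa using hAC)
          (hrel.symm.trans hrelcc)
      subst hx2cc
      have hC2 : C2 = B2 := by
        refine ih x2 (A ++ [x]) C2 (List.isChain_cons_cons.mp hchain).2 (by simpa using hAC)
          (fun y hy => hmem y (by simp [hy])) ?_
        intro w hw
        refine hsink w ?_
        rwa [List.getLast?_cons_cons]
      rw [hC2]

lemma route_subset_eq {T R : G.Route} (hsub : ∀ e ∈ T.edges, e ∈ R.edges) : T = R := by
  have hhd : T.edges.head T.ne :: T.edges.tail = T.edges := List.cons_head_tail T.ne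
  set hd := T.edges.head T.ne with hhd_def
  have hdR : hd ∈ R.edges := hsub hd (List.head_mem T.ne)
  obtain ⟨A, C, hAC⟩ := List.append_of_mem hdR
  rcases A.eq_nil_or_concat with rfl | ⟨A2, z, rfl⟩
  · have hC : C = T.edges.tail := by
      refine chain_extend T.edges.tail hd [] C ?_ (by simpa using hAC) ?_ ?_
      · rw [hhd]; exact T.chain
      · intro y hy
        exact hsub y (List.mem_of_mem_tail hy)
      · intro w hw
        rw [hhd] at hw
        rw [List.getLast?_eq_getLast T.ne, Option.some.injEq] at hw
        exact hw ▸ T.sink_end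
    refine (Route.ext ?_).symm
    rw [hAC, hC]
    simpa using hhd
  · exfalso
    have hrel : G.tgt z = G.src hd :=
      rel_of_infix (show R.edges = A2 ++ z :: hd :: C by simpa using hAC)
    exact T.source_start z hrel


lemma forward_dir (hfull : G.Full) (X : Set G.Route) (F : G.Framing)
    (hample : G.Ample F) (hset : {R : G.Route | G.Exceptional F R} = X) :
    (∀ e : G.E, ∃! R : G.Route, R ∈ X ∧ e ∈ R.edges) ∧ G.AdjBipartite X := by
  constructor
  · intro e
    obtain ⟨R, hexc, heR⟩ := hample e (not_idle hfull e)
    refine ⟨R, ⟨?_, heR⟩, ?_⟩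
    · rw [← hset]; exact hexc
    · rintro S ⟨hSX, heS⟩
      rw [← hset] at hSX
      exact exceptional_unique hfull hSX hexc heS heR
  · classical
    refine ⟨fun R => if (∀ (A : List G.E) (x y : G.E) (B : List G.E),
        R.edges = A ++ x :: y :: B → G.MinIn F x) then true else false, ?_⟩
    intro R hRX S hSX hne hadj
    obtain ⟨v, hv, hvisR, hvisS⟩ := hadj
    rw [← hset] at hRX hSX
    obtain ⟨A, x, y, B, hdR, htx⟩ := visits_pair hv hvisR
    obtain ⟨A', x2, y2, B', hdS, htx2⟩ := visits_pair hv hvisS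
    have hxx2 : x ≠ x2 := by
      rintro rfl
      exact hne (exceptional_unique hfull hRX hSX (e := x) (by rw [hdR]; simp) (by rw [hdS]; simp))
    have ht : G.tgt x2 = G.tgt x := htx2.trans htx.symm
    have hvx : G.IsInner (G.tgt x) := htx.symm ▸ hv
    have key : ∀ (R' S' : G.Route), G.Exceptional F R' → G.Exceptional F S' →
        ∀ (A1 : List G.E) (x1 y1 : G.E) (B1 : List G.E) (A2 : List G.E) (x2' y2' : G.E)
        (B2 : List G.E),
        R'.edges = A1 ++ x1 :: y1 :: B1 → S'.edges = A2 ++ x2' :: y2' :: B2 →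
        G.tgt x2' = G.tgt x1 → x2' ≠ x1 → F.inlt x1 x2' →
        (∀ (A0 : List G.E) (x0 y0 : G.E) (B0 : List G.E),
            R'.edges = A0 ++ x0 :: y0 :: B0 → G.MinIn F x0) ∧
        ¬ (∀ (A0 : List G.E) (x0 y0 : G.E) (B0 : List G.E),
            S'.edges = A0 ++ x0 :: y0 :: B0 → G.MinIn F x0) := by
      intro R' S' hR' hS' A1 x1 y1 B1 A2 x2' y2' B2 hd1 hd2 ht' hne' hlt
      have hv1 : G.IsInner (G.tgt x1) := isInner_of rfl (rel_of_infix hd1).symm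
      constructor
      · intro A0 x0 y0 B0 hd0
        rw [minin_eq hfull hR' hd0 hd1]
        exact (minIn_iff_inlt hfull ht' hne' hv1).mpr hlt
      · intro hall
        have h2 := hall A2 x2' y2' B2 hd2 x1 ht'.symm (Ne.symm hne')
        exact inlt_asymm F hlt h2
    rcases F.inlt_total x x2 ht.symm hvx hxx2 with hlt | hlt
    · obtain ⟨hRtrue, hSfalse⟩ := key R S hRX hSX A x y B A' x2 y2 B' hdR hdS ht (Ne.symm hxx2) hlt
      simp only [if_pos hRtrue, if_neg hSfalse]
      simp
    · obtain ⟨hStrue, hRfalse⟩ := key S R hSX hRX A' x2 y2 B' A x y B hdS hdR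
        (htx.trans htx2.symm) hxx2 hlt
      simp only [if_pos hStrue, if_neg hRfalse]
      simp


lemma converse_dir (hfull : G.Full) (X : Set G.Route)
    (hX : ∀ e : G.E, ∃! R : G.Route, R ∈ X ∧ e ∈ R.edges) (c : G.Route → Bool)
    (hc : ∀ R ∈ X, ∀ S ∈ X, R ≠ S → G.RoutesAdjacent R S → c R ≠ c S) :
    ∃ F : G.Framing, G.Ample F ∧ {R : G.Route | G.Exceptional F R} = X := by
  classical
  set rt : G.E → G.Route := fun e => (hX e).choose with hrt_def
  have rt_mem : ∀ e, rt e ∈ X := fun e => (hX e).choose_spec.1.1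
  have rt_edge : ∀ e, e ∈ (rt e).edges := fun e => (hX e).choose_spec.1.2
  have rt_unique : ∀ (e : G.E) (R : G.Route), R ∈ X → e ∈ R.edges → R = rt e :=
    fun e R h1 h2 => (hX e).choose_spec.2 R ⟨h1, h2⟩
  have rt_ne_in : ∀ {e f : G.E}, G.tgt e = G.tgt f → e ≠ f → rt e ≠ rt f := by
    intro e f ht hne hEq
    obtain ⟨A, B, h1⟩ := List.append_of_mem (rt_edge e)
    obtain ⟨A', B', h2⟩ := List.append_of_mem (hEq ▸ rt_edge f)
    exact hne (route_tgt_inj h1 h2 ht)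
  have rt_ne_out : ∀ {e f : G.E}, G.src e = G.src f → e ≠ f → rt e ≠ rt f := by
    intro e f ht hne hEq
    obtain ⟨A, B, h1⟩ := List.append_of_mem (rt_edge e)
    obtain ⟨A', B', h2⟩ := List.append_of_mem (hEq ▸ rt_edge f)
    exact hne (route_src_inj h1 h2 ht)
  have hcolor_in : ∀ {e f : G.E}, G.tgt e = G.tgt f → G.IsInner (G.tgt e) → e ≠ f →
      c (rt e) ≠ c (rt f) := by
    intro e f ht hv hne
    exact hc _ (rt_mem e) _ (rt_mem f) (rt_ne_in ht hne)
      ⟨G.tgt e, hv, ⟨e, rt_edge e, Or.inr rfl⟩, ⟨f, rt_edge f, Or.inr ht.symm⟩⟩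
  have hcolor_out : ∀ {e f : G.E}, G.src e = G.src f → G.IsInner (G.src e) → e ≠ f →
      c (rt e) ≠ c (rt f) := by
    intro e f ht hv hne
    exact hc _ (rt_mem e) _ (rt_mem f) (rt_ne_out ht hne)
      ⟨G.src e, hv, ⟨e, rt_edge e, Or.inl rfl⟩, ⟨f, rt_edge f, Or.inl ht.symm⟩⟩
  let F : G.Framing := {
    inlt := fun e f => G.tgt e = G.tgt f ∧ G.IsInner (G.tgt e) ∧ e ≠ f ∧
      c (rt e) = true ∧ c (rt f) = false
    outlt := fun e f => G.src e = G.src f ∧ G.IsInner (G.src e) ∧ e ≠ f ∧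
      c (rt e) = true ∧ c (rt f) = false
    inlt_tgt := fun h => h.1
    inlt_inner := fun h => h.2.1
    inlt_irrefl := fun e h => h.2.2.1 rfl
    inlt_trans := fun h1 h2 => absurd h2.2.2.2.1 (by rw [h1.2.2.2.2]; simp)
    inlt_total := by
      intro e f ht hv hne
      have hcc := hcolor_in ht hv hne
      cases h1 : c (rt e) <;> cases h2 : c (rt f)
      · rw [h1, h2] at hcc; exact absurd rfl hcc
      · exact Or.inr ⟨ht.symm, ht ▸ hv, hne.symm, rfl, rfl⟩
      · exact Or.inl ⟨ht, hv, hne, rfl, rfl⟩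
      · rw [h1, h2] at hcc; exact absurd rfl hcc
    outlt_src := fun h => h.1
    outlt_inner := fun h => h.2.1
    outlt_irrefl := fun e h => h.2.2.1 rfl
    outlt_trans := fun h1 h2 => absurd h2.2.2.2.1 (by rw [h1.2.2.2.2]; simp)
    outlt_total := by
      intro e f ht hv hne
      have hcc := hcolor_out ht hv hne
      cases h1 : c (rt e) <;> cases h2 : c (rt f)
      · rw [h1, h2] at hcc; exact absurd rfl hcc
      · exact Or.inr ⟨ht.symm, ht ▸ hv, hne.symm, rfl, rfl⟩
      · exact Or.inl ⟨ht, hv, hne, rfl, rfl⟩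
      · rw [h1, h2] at hcc; exact absurd rfl hcc }
  have hXexc : ∀ R ∈ X, G.Exceptional F R := by
    intro R hRX S
    constructor
    · rintro ⟨v, a, b, cc, d, ea, ec, hP, hQ, hta, htc, hbne, hdne, hin, hout⟩
      obtain ⟨p, q, s', e, f, hnef, hPp, hQq, hlt⟩ := hin
      have heR : e ∈ R.edges := by
        rw [hP]
        have he' : e ∈ a ++ [ea] := by rw [hPp]; simp
        simp only [List.append_assoc, List.mem_append] at he' ⊢
        tauto
      have hcRtrue : c R = true := by
        rw [rt_unique e R hRX heR]
        exact hlt.2.2.2.1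
      obtain ⟨s2, p2, q2, e2, f2, hnef2, hd2, hb2, hlt2⟩ := hout
      have hfR : f2 ∈ R.edges := by
        rw [hP]
        have hf' : f2 ∈ b := by rw [hb2]; simp
        simp [hf']
      have hcRfalse : c R = false := by
        rw [rt_unique f2 R hRX hfR]
        exact hlt2.2.2.2.2
      rw [hcRtrue] at hcRfalse
      exact Bool.noConfusion hcRfalse
    · rintro ⟨v, a, b, cc, d, ea, ec, hP, hQ, hta, htc, hbne, hdne, hin, hout⟩
      obtain ⟨p, q, s', e, f, hnef, hPp, hQq, hlt⟩ := hin
      have hfR : f ∈ R.edges := by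
        rw [hQ]
        have hf' : f ∈ cc ++ [ec] := by rw [hQq]; simp
        simp only [List.append_assoc, List.mem_append] at hf' ⊢
        tauto
      have hcRfalse : c R = false := by
        rw [rt_unique f R hRX hfR]
        exact hlt.2.2.2.2
      obtain ⟨s2, p2, q2, e2, f2, hnef2, hd2, hb2, hlt2⟩ := hout
      have heR : e2 ∈ R.edges := by
        rw [hQ]
        have he' : e2 ∈ d := by rw [hd2]; simp
        simp [he']
      have hcRtrue : c R = true := by
        rw [rt_unique e2 R hRX heR]
        exact hlt2.2.2.2.1
      rw [hcRtrue] at hcRfalse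
      exact Bool.noConfusion hcRfalse
  have hexcX : ∀ T : G.Route, G.Exceptional F T → T ∈ X := by
    intro T hT
    by_contra hTX
    by_cases hall : ∀ (A : List G.E) (x y : G.E) (B : List G.E),
        T.edges = A ++ x :: y :: B → rt x = rt y
    · have haux : ∀ (A : List G.E) (x : G.E) (B : List G.E),
          T.edges = A ++ x :: B → rt x = rt (T.edges.head T.ne) := by
        intro A
        induction A using List.reverseRecOn with
        | nil =>
          intro x B h
          rw [head_eq_of_decomp h]
        | append_singleton A z ih =>
          intro x B h
          have h1 : rt z = rt x := hall A z x B (by simpa using h)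
          have h2 := ih z (x :: B) (by simpa using h)
          rw [← h1, h2]
      have hsub : ∀ e ∈ T.edges, e ∈ (rt (T.edges.head T.ne)).edges := by
        intro e he
        obtain ⟨A, B, hAB⟩ := List.append_of_mem he
        rw [← haux A e B hAB]
        exact rt_edge e
      have hTeq : T = rt (T.edges.head T.ne) := route_subset_eq hsub
      exact hTX (hTeq ▸ rt_mem (T.edges.head T.ne))
    · push_neg at hall
      obtain ⟨A, x, y, B, hd, hne_rt⟩ := hall
      have hrel : G.tgt x = G.src y := rel_of_infix hd
      have hv : G.IsInner (G.tgt x) := isInner_of rfl hrel.symm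
      obtain ⟨g, hg, hgne⟩ := exists_other_in hfull hv rfl
      have hv' : G.IsInner (G.src y) := hrel ▸ hv
      obtain ⟨h2, hh2, hh2ne⟩ := exists_other_out hfull hv' rfl
      have hcy : c (rt y) ≠ c (rt x) := by
        refine hc _ (rt_mem y) _ (rt_mem x) (Ne.symm hne_rt)
          ⟨G.tgt x, hv, ⟨y, rt_edge y, Or.inl hrel.symm⟩, ⟨x, rt_edge x, Or.inr rfl⟩⟩
      have hcg : c (rt g) ≠ c (rt x) := by
        refine hc _ (rt_mem g) _ (rt_mem x) (rt_ne_in hg hgne)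
          ⟨G.tgt x, hv, ⟨g, rt_edge g, Or.inr hg⟩, ⟨x, rt_edge x, Or.inr rfl⟩⟩
      have hch2 : c (rt h2) ≠ c (rt y) := by
        refine hc _ (rt_mem h2) _ (rt_mem y) (rt_ne_out hh2 hh2ne)
          ⟨G.src y, hv', ⟨h2, rt_edge h2, Or.inl hh2⟩, ⟨y, rt_edge y, Or.inl rfl⟩⟩
      obtain ⟨U, cu, du, hU⟩ := exists_route_pair g h2 (hg.trans (hrel.trans hh2.symm))
      cases hβ : c (rt x)
      · have hcyv : c (rt y) = true := by
          cases h' : c (rt y)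
          · rw [h', hβ] at hcy; exact absurd rfl hcy
          · rfl
        have hcgv : c (rt g) = true := by
          cases h' : c (rt g)
          · rw [h', hβ] at hcg; exact absurd rfl hcg
          · rfl
        have hch2v : c (rt h2) = false := by
          cases h' : c (rt h2)
          · rfl
          · rw [h', hcyv] at hch2; exact absurd rfl hch2
        have hin : F.inlt g x := ⟨hg, hg ▸ hv, hgne, hcgv, hβ⟩
        have hout : F.outlt y h2 := ⟨hh2.symm, hv', Ne.symm hh2ne, hcyv, hch2v⟩
        refine (hT U).2 (mkConflict F (s := [])
          (show U.edges = cu ++ g :: ([] ++ h2 :: du) by simpa using hU)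
          (show T.edges = A ++ x :: ([] ++ y :: B) by simpa using hd) hg.symm hin hout)
      · have hcyv : c (rt y) = false := by
          cases h' : c (rt y)
          · rfl
          · rw [h', hβ] at hcy; exact absurd rfl hcy
        have hcgv : c (rt g) = false := by
          cases h' : c (rt g)
          · rfl
          · rw [h', hβ] at hcg; exact absurd rfl hcg
        have hch2v : c (rt h2) = true := by
          cases h' : c (rt h2)
          · rw [h', hcyv] at hch2; exact absurd rfl hch2
          · rfl
        have hin : F.inlt x g := ⟨hg.symm, hv, Ne.symm hgne, hβ, hcgv⟩
        have hout : F.outlt h2 y := ⟨hh2, hh2 ▸ hv', hh2ne, hch2v, hcyv⟩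
        refine (hT U).1 (mkConflict F (s := [])
          (show T.edges = A ++ x :: ([] ++ y :: B) by simpa using hd)
          (show U.edges = cu ++ g :: ([] ++ h2 :: du) by simpa using hU) hg hin hout)
  exact ⟨F, fun e _ => ⟨rt e, hXexc _ (rt_mem e), rt_edge e⟩,
    Set.ext fun T => ⟨fun h => hexcX T h, fun h => hXexc T h⟩⟩

end DAG

/-- For a full DAG `G` and a set `X` of routes, there is an
ample framing whose exceptional set is exactly `X` if and only if every edge of
`G` lies in exactly one route of `X` and the adjacency graph `Adj(G,X)` is
bipartite. -/
theorem ample_framing_exceptional_set_characterization (G : DAG)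
    (hfull : G.Full) (X : Set G.Route) :
    (∃ F : G.Framing, G.Ample F ∧ {R : G.Route | G.Exceptional F R} = X) ↔
    ((∀ e : G.E, ∃! R : G.Route, R ∈ X ∧ e ∈ R.edges) ∧ G.AdjBipartite X) := by
  constructor
  · rintro ⟨F, hample, hset⟩
    exact DAG.forward_dir hfull X F hample hset
  · rintro ⟨hX, c, hc⟩
    exact DAG.converse_dir hfull X hX c hc
end

section
/- Let G be a full DAG with ample framing F. The set of characteristic vectors of the exceptional routes of [G,F] forms a special simplex of the flow polytope F₁(G): every facet of F₁(G) contains all exceptional routes except exactly one. -/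
section Helpers

namespace DAG

variable (G : DAG)

/-- The step relation of the DAG is well-founded (going backwards). -/
lemma wf_step : WellFounded (fun a b : G.V => ∃ e : G.E, G.src e = a ∧ G.tgt e = b) := by
  haveI : IsTrans G.V
      (Relation.TransGen (fun a b : G.V => ∃ e : G.E, G.src e = a ∧ G.tgt e = b)) :=
    ⟨fun _ _ _ => Relation.TransGen.trans⟩
  haveI : IsIrrefl G.V
      (Relation.TransGen (fun a b : G.V => ∃ e : G.E, G.src e = a ∧ G.tgt e = b)) :=
    ⟨fun v h => G.acyclic v h⟩
  exact Subrelation.wf (fun h => Relation.TransGen.single h)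
    (Finite.wellFounded_of_trans_of_irrefl
      (Relation.TransGen (fun a b : G.V => ∃ e : G.E, G.src e = a ∧ G.tgt e = b)))

/-- The step relation of the DAG is well-founded (going forwards). -/
lemma wf_flip : WellFounded (fun b a : G.V => ∃ e : G.E, G.src e = a ∧ G.tgt e = b) := by
  haveI : IsTrans G.V
      (Relation.TransGen (fun b a : G.V => ∃ e : G.E, G.src e = a ∧ G.tgt e = b)) :=
    ⟨fun _ _ _ => Relation.TransGen.trans⟩
  haveI : IsIrrefl G.V
      (Relation.TransGen (fun b a : G.V => ∃ e : G.E, G.src e = a ∧ G.tgt e = b)) :=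
    ⟨fun v h => G.acyclic v (Relation.transGen_swap.mp h)⟩
  exact Subrelation.wf (fun h => Relation.TransGen.single h)
    (Finite.wellFounded_of_trans_of_irrefl
      (Relation.TransGen (fun b a : G.V => ∃ e : G.E, G.src e = a ∧ G.tgt e = b)))

/-- Every non-sink vertex admits a path to a sink. -/
lemma toSink : ∀ v : G.V, ¬ G.IsSink v →
    ∃ (L : List G.E) (hL : L ≠ []), L.Chain' (fun e f => G.tgt e = G.src f) ∧
      G.src (L.head hL) = v ∧ G.IsSink (G.tgt (L.getLast hL)) := by
  intro v
  refine G.wf_flip.induction (C := fun v => ¬ G.IsSink v →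
    ∃ (L : List G.E) (hL : L ≠ []), L.Chain' (fun e f => G.tgt e = G.src f) ∧
      G.src (L.head hL) = v ∧ G.IsSink (G.tgt (L.getLast hL))) v ?_
  intro v ih hv
  unfold DAG.IsSink at hv
  push_neg at hv
  obtain ⟨e0, he0⟩ := hv
  by_cases hs : G.IsSink (G.tgt e0)
  · exact ⟨[e0], by simp, List.isChain_singleton e0, by simpa using he0, by simpa using hs⟩
  · obtain ⟨L, hL, hch, hhd, hsk⟩ := ih (G.tgt e0) ⟨e0, he0, rfl⟩ hs
    refine ⟨e0 :: L, by simp, ?_, by simpa using he0, ?_⟩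
    · refine List.isChain_cons.mpr ⟨?_, hch⟩
      intro y hy
      rw [List.head?_eq_head hL] at hy
      have hyy : L.head hL = y := by simpa using hy
      subst hyy
      exact hhd.symm
    · rw [List.getLast_cons hL]
      exact hsk

/-- Every non-source vertex admits a path from a source. -/
lemma toSource : ∀ v : G.V, ¬ G.IsSource v →
    ∃ (L : List G.E) (hL : L ≠ []), L.Chain' (fun e f => G.tgt e = G.src f) ∧
      G.tgt (L.getLast hL) = v ∧ G.IsSource (G.src (L.head hL)) := by
  intro v
  refine G.wf_step.induction (C := fun v => ¬ G.IsSource v →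
    ∃ (L : List G.E) (hL : L ≠ []), L.Chain' (fun e f => G.tgt e = G.src f) ∧
      G.tgt (L.getLast hL) = v ∧ G.IsSource (G.src (L.head hL))) v ?_
  intro v ih hv
  unfold DAG.IsSource at hv
  push_neg at hv
  obtain ⟨e0, he0⟩ := hv
  by_cases hs : G.IsSource (G.src e0)
  · exact ⟨[e0], by simp, List.isChain_singleton e0, by simpa using he0, by simpa using hs⟩
  · obtain ⟨L, hL, hch, hlast, hsrc⟩ := ih (G.src e0) ⟨e0, rfl, he0⟩ hs
    refine ⟨L ++ [e0], by simp, ?_, ?_, ?_⟩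
    · refine List.isChain_append.mpr ⟨hch, List.isChain_singleton e0, ?_⟩
      intro x hx y hy
      rw [List.getLast?_eq_getLast hL] at hx
      have hxx : L.getLast hL = x := by simpa using hx
      have hyy : e0 = y := by simpa using hy
      subst hxx; subst hyy
      exact hlast
    · rw [List.getLast_append_of_ne_nil _ (by simp)]
      simpa using he0
    · rw [List.head_append_of_ne_nil hL]
      exact hsrc

/-- Any nonempty chain of edges extends to a route. -/
lemma mk_route (M : List G.E) (hM : M ≠ [])
    (hch : M.Chain' (fun e f => G.tgt e = G.src f)) :
    ∃ (T : G.Route) (p q : List G.E), T.edges = p ++ M ++ q := by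
  have hp : ∃ p : List G.E, p.Chain' (fun e f => G.tgt e = G.src f) ∧
      (∀ h : p ≠ [], G.tgt (p.getLast h) = G.src (M.head hM) ∧
        G.IsSource (G.src (p.head h))) ∧
      (p = [] → G.IsSource (G.src (M.head hM))) := by
    by_cases hs : G.IsSource (G.src (M.head hM))
    · exact ⟨[], List.isChain_nil, fun h => absurd rfl h, fun _ => hs⟩
    · obtain ⟨L, hL, h1, h2, h3⟩ := G.toSource _ hs
      exact ⟨L, h1, fun h => ⟨h2, h3⟩, fun h => absurd h hL⟩
  have hq : ∃ q : List G.E, q.Chain' (fun e f => G.tgt e = G.src f) ∧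
      (∀ h : q ≠ [], G.src (q.head h) = G.tgt (M.getLast hM) ∧
        G.IsSink (G.tgt (q.getLast h))) ∧
      (q = [] → G.IsSink (G.tgt (M.getLast hM))) := by
    by_cases hs : G.IsSink (G.tgt (M.getLast hM))
    · exact ⟨[], List.isChain_nil, fun h => absurd rfl h, fun _ => hs⟩
    · obtain ⟨L, hL, h1, h2, h3⟩ := G.toSink _ hs
      exact ⟨L, h1, fun h => ⟨h2, h3⟩, fun h => absurd h hL⟩
  obtain ⟨p, hpch, hpne, hpnil⟩ := hp
  obtain ⟨q, hqch, hqne, hqnil⟩ := hq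
  have hne : p ++ M ++ q ≠ [] := by
    intro h
    rcases List.append_eq_nil_iff.mp h with ⟨h1, _⟩
    rcases List.append_eq_nil_iff.mp h1 with ⟨_, h3⟩
    exact hM h3
  have hchain : (p ++ M ++ q).Chain' (fun e f => G.tgt e = G.src f) := by
    refine List.isChain_append.mpr ⟨List.isChain_append.mpr ⟨hpch, hch, ?_⟩, hqch, ?_⟩
    · intro x hx y hy
      have hp' : p ≠ [] := by rintro rfl; simp at hx
      rw [List.getLast?_eq_getLast hp'] at hx
      rw [List.head?_eq_head hM] at hy
      have hxx : p.getLast hp' = x := by simpa using hx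
      have hyy : M.head hM = y := by simpa using hy
      subst hxx; subst hyy
      exact (hpne hp').1
    · intro x hx y hy
      have hq' : q ≠ [] := by rintro rfl; simp at hy
      have hpm : p ++ M ≠ [] := by
        intro h; exact hM (List.append_eq_nil_iff.mp h).2
      rw [List.getLast?_eq_getLast hpm] at hx
      rw [List.head?_eq_head hq'] at hy
      have hxx : (p ++ M).getLast hpm = x := by simpa using hx
      have hyy : q.head hq' = y := by simpa using hy
      subst hxx; subst hyy
      rw [List.getLast_append_of_ne_nil _ hM]
      exact ((hqne hq').1).symm
  have hsrc : G.IsSource (G.src ((p ++ M ++ q).head hne)) := by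
    rcases List.eq_nil_or_concat p with rfl | ⟨l, a, hp'⟩
    · have : ((([] : List G.E) ++ M ++ q).head hne) = M.head hM := by
        simp only [List.nil_append]
        exact List.head_append_of_ne_nil hM
      rw [this]
      exact hpnil rfl
    · rw [List.concat_eq_append] at hp'
      subst hp'
      have hpne' : l ++ [a] ≠ [] := by simp
      have : ((l ++ [a] ++ M ++ q).head hne) = (l ++ [a]).head hpne' := by
        rw [List.head_append_of_ne_nil (by simp : l ++ [a] ++ M ≠ [])]
        rw [List.head_append_of_ne_nil hpne']
      rw [this]
      exact (hpne hpne').2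
  have hsink : G.IsSink (G.tgt ((p ++ M ++ q).getLast hne)) := by
    rcases List.eq_nil_or_concat q with rfl | ⟨l, a, hq'⟩
    · have : ((p ++ M ++ ([] : List G.E)).getLast hne) = M.getLast hM := by
        simp only [List.append_nil]
        exact List.getLast_append_of_ne_nil _ hM
      rw [this]
      exact hqnil rfl
    · rw [List.concat_eq_append] at hq'
      subst hq'
      have hqne' : l ++ [a] ≠ [] := by simp
      have : ((p ++ M ++ (l ++ [a])).getLast hne) = (l ++ [a]).getLast hqne' := by
        exact List.getLast_append_of_ne_nil _ hqne'
      rw [this]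
      exact (hqne hqne').2
  exact ⟨⟨p ++ M ++ q, hne, hchain, hsrc, hsink⟩, p, q, rfl⟩

/-- There is a route passing through any two consecutive edges. -/
lemma route_through (e1 e2 : G.E) (h12 : G.tgt e1 = G.src e2) :
    ∃ (T : G.Route) (p q : List G.E), T.edges = p ++ e1 :: e2 :: q := by
  obtain ⟨T, p, q, hT⟩ := G.mk_route [e1, e2] (by simp)
    (List.isChain_cons_cons.mpr ⟨h12, List.isChain_singleton e2⟩)
  exact ⟨T, p, q, by simpa using hT⟩

/-- Adjacent edges in a chain are consecutive. -/
lemma chain_adj {p q : List G.E} {x y : G.E}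
    (h : (p ++ x :: y :: q).Chain' (fun e f => G.tgt e = G.src f)) :
    G.tgt x = G.src y :=
  (List.isChain_cons_cons.mp (List.isChain_append.mp h).2.1).1

/-- If a vertex has in-degree two, every incoming edge has a mate. -/
lemma exists_other_in_s18 {v : G.V} (h2 : G.indeg v = 2) (d : G.E) (hd : G.tgt d = v) :
    ∃ e' : G.E, G.tgt e' = v ∧ e' ≠ d := by
  have hlt : 1 < Fintype.card {e : G.E // G.tgt e = v} := by
    unfold DAG.indeg at h2; omega
  obtain ⟨b, hb⟩ := Fintype.exists_ne_of_one_lt_card hlt ⟨d, hd⟩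
  exact ⟨b.1, b.2, fun h => hb (Subtype.ext h)⟩

/-- If a vertex has out-degree two, every outgoing edge has a mate. -/
lemma exists_other_out_s18 {v : G.V} (h2 : G.outdeg v = 2) (d : G.E) (hd : G.src d = v) :
    ∃ e' : G.E, G.src e' = v ∧ e' ≠ d := by
  have hlt : 1 < Fintype.card {e : G.E // G.src e = v} := by
    unfold DAG.outdeg at h2; omega
  obtain ⟨b, hb⟩ := Fintype.exists_ne_of_one_lt_card hlt ⟨d, hd⟩
  exact ⟨b.1, b.2, fun h => hb (Subtype.ext h)⟩

/-- Two exceptional routes cannot diverge forwards after a common edge. -/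
lemma no_fwd_div' (F : G.Framing) (hfull : G.Full) {R S : G.Route}
    (hR : G.Exceptional F R) (hS : G.Exceptional F S)
    {a c bR bS : List G.E} {d f g : G.E}
    (hre : R.edges = a ++ d :: f :: bR) (hse : S.edges = c ++ d :: g :: bS)
    (hfg : f ≠ g) (hout : F.outlt f g) : False := by
  have hdf : G.tgt d = G.src f := G.chain_adj (hre ▸ R.chain)
  have hdg : G.tgt d = G.src g := G.chain_adj (hse ▸ S.chain)
  have hinner : G.IsInner (G.tgt d) :=
    ⟨fun hs => hs d rfl, fun hs => hs f hdf.symm⟩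
  obtain ⟨e', he', hed⟩ := G.exists_other_in_s18 (hfull _ hinner).1 d rfl
  have hcomp := F.inlt_total e' d he' (by rw [he']; exact hinner) hed
  rcases hcomp with hlt | hlt
  · obtain ⟨T, p, q, hte⟩ := G.route_through e' g (by rw [he', hdg])
    refine (hR T).2 ⟨G.tgt d, p, g :: q, a, f :: bR, e', d, ?_, ?_, he', rfl,
      by simp, by simp, ⟨p, a, [], e', d, hed, rfl, rfl, hlt⟩,
      ⟨[], bR, q, f, g, hfg, rfl, rfl, hout⟩⟩
    · rw [hte]; simp
    · rw [hre]; simp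
  · obtain ⟨T, p, q, hte⟩ := G.route_through e' f (by rw [he', hdf])
    refine (hS T).1 ⟨G.tgt d, c, g :: bS, p, f :: q, d, e', ?_, ?_, rfl, he',
      by simp, by simp, ⟨c, p, [], d, e', Ne.symm hed, rfl, rfl, hlt⟩,
      ⟨[], q, bS, f, g, hfg, rfl, rfl, hout⟩⟩
    · rw [hse]; simp
    · rw [hte]; simp

/-- Two exceptional routes cannot diverge forwards after a common edge. -/
lemma no_fwd_div (F : G.Framing) (hfull : G.Full) {R S : G.Route}
    (hR : G.Exceptional F R) (hS : G.Exceptional F S)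
    {a c bR bS : List G.E} {d f g : G.E}
    (hre : R.edges = a ++ d :: f :: bR) (hse : S.edges = c ++ d :: g :: bS)
    (hfg : f ≠ g) : False := by
  have hdf : G.tgt d = G.src f := G.chain_adj (hre ▸ R.chain)
  have hdg : G.tgt d = G.src g := G.chain_adj (hse ▸ S.chain)
  have hinner : G.IsInner (G.tgt d) :=
    ⟨fun hs => hs d rfl, fun hs => hs f hdf.symm⟩
  have hcomp := F.outlt_total f g (by rw [← hdf, ← hdg]) (by rw [← hdf]; exact hinner) hfg
  rcases hcomp with hlt | hlt
  · exact G.no_fwd_div' F hfull hR hS hre hse hfg hlt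
  · exact G.no_fwd_div' F hfull hS hR hse hre (Ne.symm hfg) hlt

/-- Two exceptional routes cannot diverge backwards before a common suffix. -/
lemma no_bwd_div' (F : G.Framing) (hfull : G.Full) {R S : G.Route}
    (hR : G.Exceptional F R) (hS : G.Exceptional F S)
    {a c w : List G.E} {ea ec : G.E}
    (hre : R.edges = a ++ ea :: w) (hse : S.edges = c ++ ec :: w)
    (hne : ea ≠ ec) (hw : w ≠ []) (hin : F.inlt ea ec) : False := by
  obtain ⟨d0, w0, rfl⟩ := List.exists_cons_of_ne_nil hw
  have h1 : G.tgt ea = G.src d0 := G.chain_adj (hre ▸ R.chain)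
  have h2 : G.tgt ec = G.src d0 := G.chain_adj (hse ▸ S.chain)
  have hinner : G.IsInner (G.src d0) :=
    ⟨fun hs => hs ea h1, fun hs => hs d0 rfl⟩
  obtain ⟨f', hf', hfd⟩ := G.exists_other_out_s18 (hfull _ hinner).2 d0 rfl
  have hcomp := F.outlt_total d0 f' hf'.symm hinner (Ne.symm hfd)
  rcases hcomp with hlt | hlt
  · obtain ⟨T, p, q, hte⟩ := G.route_through ea f' (h1.trans hf'.symm)
    refine (hS T).2 ⟨G.src d0, p, f' :: q, c, d0 :: w0, ea, ec, ?_, ?_, h1, h2,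
      by simp, by simp, ⟨p, c, [], ea, ec, hne, rfl, rfl, hin⟩,
      ⟨[], w0, q, d0, f', Ne.symm hfd, rfl, rfl, hlt⟩⟩
    · rw [hte]; simp
    · rw [hse]; simp
  · obtain ⟨T, p, q, hte⟩ := G.route_through ec f' (h2.trans hf'.symm)
    refine (hR T).1 ⟨G.src d0, a, d0 :: w0, p, f' :: q, ea, ec, ?_, ?_, h1, h2,
      by simp, by simp, ⟨a, p, [], ea, ec, hne, rfl, rfl, hin⟩,
      ⟨[], q, w0, f', d0, hfd, rfl, rfl, hlt⟩⟩
    · rw [hre]; simp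
    · rw [hte]; simp

/-- Two exceptional routes cannot diverge backwards before a common suffix. -/
lemma no_bwd_div (F : G.Framing) (hfull : G.Full) {R S : G.Route}
    (hR : G.Exceptional F R) (hS : G.Exceptional F S)
    {a c w : List G.E} {ea ec : G.E}
    (hre : R.edges = a ++ ea :: w) (hse : S.edges = c ++ ec :: w)
    (hne : ea ≠ ec) (hw : w ≠ []) : False := by
  obtain ⟨d0, w0, rfl⟩ := List.exists_cons_of_ne_nil hw
  have h1 : G.tgt ea = G.src d0 := G.chain_adj (hre ▸ R.chain)
  have h2 : G.tgt ec = G.src d0 := G.chain_adj (hse ▸ S.chain)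
  have hinner : G.IsInner (G.src d0) :=
    ⟨fun hs => hs ea h1, fun hs => hs d0 rfl⟩
  have hcomp := F.inlt_total ea ec (h1.trans h2.symm) (by rw [h1]; exact hinner) hne
  rcases hcomp with hlt | hlt
  · exact G.no_bwd_div' F hfull hR hS hre hse hne (by simp) hlt
  · exact G.no_bwd_div' F hfull hS hR hse hre (Ne.symm hne) (by simp) hlt

end DAG

/-- Two distinct lists diverge somewhere, or one strictly extends the other. -/
lemma list_div {α : Type} : ∀ (x y : List α), x ≠ y →
    (∃ (c : List α) (a b : α) (x' y' : List α), a ≠ b ∧ x = c ++ a :: x' ∧ y = c ++ b :: y') ∨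
    (∃ (a : α) (x' : List α), x = y ++ a :: x') ∨
    (∃ (a : α) (y' : List α), y = x ++ a :: y')
  | [], [] => fun h => absurd rfl h
  | [], b :: y' => fun _ => Or.inr (Or.inr ⟨b, y', rfl⟩)
  | a :: x', [] => fun _ => Or.inr (Or.inl ⟨a, x', by simp⟩)
  | a :: x', b :: y' => fun h => by
    by_cases hab : a = b
    · subst hab
      have hxy : x' ≠ y' := fun hh => h (by rw [hh])
      rcases list_div x' y' hxy with ⟨c, u, v, xx, yy, huv, hx, hy⟩ | ⟨u, xx, hx⟩ | ⟨u, yy, hy⟩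
      · exact Or.inl ⟨a :: c, u, v, xx, yy, huv, by rw [hx]; rfl, by rw [hy]; rfl⟩
      · exact Or.inr (Or.inl ⟨u, xx, by rw [hx]; rfl⟩)
      · exact Or.inr (Or.inr ⟨u, yy, by rw [hy]; rfl⟩)
    · exact Or.inl ⟨[], a, b, x', y', hab, rfl, rfl⟩

end Helpers

/-- For a full DAG with ample framing, the exceptional routes
form a special simplex of the flow polytope: every facet `{x | x e = 0}` of
`F₁(G)` contains the characteristic vectors of all exceptional routes except
exactly one. -/
theorem exceptional_routes_special_simplex (G : DAG) (F : G.Framing)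
    (hfull : G.Full) (hample : G.Ample F) (e : G.E) :
    ∃! R : G.Route, G.Exceptional F R ∧ G.charVec R e ≠ 0 := by
  classical
  have hnotidle : ¬ G.Idle e := by
    rintro (⟨hin, huniq⟩ | ⟨hin, huniq⟩)
    · have h2 := (hfull _ hin).1
      have hle : Fintype.card {f : G.E // G.tgt f = G.tgt e} ≤ 1 :=
        Fintype.card_le_one_iff.mpr fun a b =>
          Subtype.ext ((huniq a.1 a.2).trans (huniq b.1 b.2).symm)
      unfold DAG.indeg at h2
      omega
    · have h2 := (hfull _ hin).2
      have hle : Fintype.card {f : G.E // G.src f = G.src e} ≤ 1 :=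
        Fintype.card_le_one_iff.mpr fun a b =>
          Subtype.ext ((huniq a.1 a.2).trans (huniq b.1 b.2).symm)
      unfold DAG.outdeg at h2
      omega
  obtain ⟨R, hRex, hRe⟩ := hample e hnotidle
  refine ⟨R, ⟨hRex, by simp [DAG.charVec, hRe]⟩, ?_⟩
  rintro S ⟨hSex, hSne⟩
  have hSe : e ∈ S.edges := by
    by_contra h
    exact hSne (by simp [DAG.charVec, h])
  have hedges : S.edges = R.edges := by
    by_contra hne
    obtain ⟨sp, ss, hsdec⟩ := List.append_of_mem hSe
    obtain ⟨rp, rs, hrdec⟩ := List.append_of_mem hRe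
    by_cases hsuf : ss = rs
    · subst hsuf
      have hpre : sp ≠ rp := by
        intro h; exact hne (by rw [hsdec, hrdec, h])
      have hrev : sp.reverse ≠ rp.reverse := fun h => hpre (List.reverse_injective h)
      rcases list_div sp.reverse rp.reverse hrev with
        ⟨c0, x, y, x', y', hxy, hx, hy⟩ | ⟨u, xx, hx⟩ | ⟨u, yy, hy⟩
      · have hsp : sp = x'.reverse ++ x :: c0.reverse := by
          rw [← List.reverse_reverse sp, hx]; simp
        have hrp : rp = y'.reverse ++ y :: c0.reverse := by
          rw [← List.reverse_reverse rp, hy]; simp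
        have hse' : S.edges = x'.reverse ++ x :: (c0.reverse ++ e :: ss) := by
          rw [hsdec, hsp]; simp
        have hre' : R.edges = y'.reverse ++ y :: (c0.reverse ++ e :: ss) := by
          rw [hrdec, hrp]; simp
        exact G.no_bwd_div F hfull hSex hRex hse' hre' hxy (by simp)
      · -- sp = xx.reverse ++ u :: rp : the edge u enters the source of R
        have hsp : sp = xx.reverse ++ u :: rp := by
          rw [← List.reverse_reverse sp, hx]; simp
        obtain ⟨h0, t, hrt⟩ := List.exists_cons_of_ne_nil R.ne
        have hse' : S.edges = xx.reverse ++ u :: h0 :: t := by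
          have h5 : h0 :: t = rp ++ e :: ss := by rw [← hrt, hrdec]
          rw [hsdec, hsp, h5]; simp
        have hadj : G.tgt u = G.src h0 := G.chain_adj (hse' ▸ S.chain)
        have h6 : R.edges.head? = some h0 := by rw [hrt]; rfl
        have h7 : R.edges.head? = some (R.edges.head R.ne) := List.head?_eq_head R.ne
        have hh : R.edges.head R.ne = h0 := by
          rw [h7] at h6; exact Option.some.inj h6
        exact (hh ▸ R.source_start) u hadj
      · -- rp = yy.reverse ++ u :: sp : the edge u enters the source of S
        have hrp : rp = yy.reverse ++ u :: sp := by
          rw [← List.reverse_reverse rp, hy]; simp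
        obtain ⟨h0, t, hst⟩ := List.exists_cons_of_ne_nil S.ne
        have hre' : R.edges = yy.reverse ++ u :: h0 :: t := by
          have h5 : h0 :: t = sp ++ e :: ss := by rw [← hst, hsdec]
          rw [hrdec, hrp, h5]; simp
        have hadj : G.tgt u = G.src h0 := G.chain_adj (hre' ▸ R.chain)
        have h6 : S.edges.head? = some h0 := by rw [hst]; rfl
        have h7 : S.edges.head? = some (S.edges.head S.ne) := List.head?_eq_head S.ne
        have hh : S.edges.head S.ne = h0 := by
          rw [h7] at h6; exact Option.some.inj h6
        exact (hh ▸ S.source_start) u hadj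
    · rcases list_div ss rs hsuf with
        ⟨c0, f, g, x', y', hfg, hx, hy⟩ | ⟨u, xx, hx⟩ | ⟨u, yy, hy⟩
      · rcases List.eq_nil_or_concat (e :: c0) with habs | ⟨dl, d, hdl⟩
        · exact absurd habs (by simp)
        rw [List.concat_eq_append] at hdl
        have hse' : S.edges = (sp ++ dl) ++ d :: f :: x' := by
          rw [hsdec, hx]
          have h5 : sp ++ e :: (c0 ++ f :: x') = sp ++ (e :: c0) ++ (f :: x') := by simp
          rw [h5, hdl]; simp
        have hre' : R.edges = (rp ++ dl) ++ d :: g :: y' := by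
          rw [hrdec, hy]
          have h5 : rp ++ e :: (c0 ++ g :: y') = rp ++ (e :: c0) ++ (g :: y') := by simp
          rw [h5, hdl]; simp
        exact G.no_fwd_div F hfull hSex hRex hse' hre' hfg
      · -- ss = rs ++ u :: xx : the edge u leaves the sink of R
        rcases List.eq_nil_or_concat (e :: rs) with habs | ⟨dl, x, hdl⟩
        · exact absurd habs (by simp)
        rw [List.concat_eq_append] at hdl
        have hse' : S.edges = (sp ++ dl) ++ x :: u :: xx := by
          rw [hsdec, hx]
          have h5 : sp ++ e :: (rs ++ u :: xx) = sp ++ (e :: rs) ++ (u :: xx) := by simp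
          rw [h5, hdl]; simp
        have hadj : G.tgt x = G.src u := G.chain_adj (hse' ▸ S.chain)
        have h6 : R.edges.getLast? = some x := by
          rw [hrdec, hdl, ← List.append_assoc]
          simp
        have h7 : R.edges.getLast? = some (R.edges.getLast R.ne) :=
          List.getLast?_eq_getLast R.ne
        have hh : R.edges.getLast R.ne = x := by
          rw [h7] at h6; exact Option.some.inj h6
        exact (hh ▸ R.sink_end) u hadj.symm
      · -- rs = ss ++ u :: yy : the edge u leaves the sink of S
        rcases List.eq_nil_or_concat (e :: ss) with habs | ⟨dl, x, hdl⟩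
        · exact absurd habs (by simp)
        rw [List.concat_eq_append] at hdl
        have hre' : R.edges = (rp ++ dl) ++ x :: u :: yy := by
          rw [hrdec, hy]
          have h5 : rp ++ e :: (ss ++ u :: yy) = rp ++ (e :: ss) ++ (u :: yy) := by simp
          rw [h5, hdl]; simp
        have hadj : G.tgt x = G.src u := G.chain_adj (hre' ▸ R.chain)
        have h6 : S.edges.getLast? = some x := by
          rw [hsdec, hdl, ← List.append_assoc]
          simp
        have h7 : S.edges.getLast? = some (S.edges.getLast S.ne) :=
          List.getLast?_eq_getLast S.ne
        have hh : S.edges.getLast S.ne = x := by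
          rw [h7] at h6; exact Option.some.inj h6
        exact (hh ▸ S.sink_end) u hadj.symm
  cases S; cases R
  simp only at hedges
  subst hedges
  rfl
end
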